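/- Let F = x₀·f_{d-1} + f_d and a ∈ ℙⁿ⁻¹. If not all points of the line L_a are singular on Z(F), then L_a contains at most one singular point of Z(F) other than O = (1:0:⋯:0). -/

import Mathlib

/-!
Since `F` is homogeneous of degree `d`, singularity is invariant under scaling, so a point
`(s : t a)` with `t ≠ 0` may be replaced by `(u : a)` with `u = s / t`. There the singularity
conditions read `g(a) = h(a) = 0` and `u ∇g(a) + ∇h(a) = 0`, which are affine in `u`: two
distinct solutions `u` force `∇g(a) = ∇h(a) = 0`, and then, by homogeneity of `g`, `h` and their
partial derivatives, every point of `L_a` (including `O`) is singular.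
-/

open MvPolynomial

def SingularAt {K : Type*} [CommRing K] {n : ℕ} (F : MvPolynomial (Fin (n + 1)) K)
    (P : Fin (n + 1) → K) : Prop :=
  eval P F = 0 ∧ ∀ i, eval P (pderiv i F) = 0

theorem MvPolynomial.IsHomogeneous.eval_smul {R σ : Type*} [CommSemiring R]
    {φ : MvPolynomial σ R} {m : ℕ} (hφ : φ.IsHomogeneous m) (c : R) (x : σ → R) :
    eval (c • x) φ = c ^ m * eval x φ := by
  rw [eval_eq, eval_eq, Finset.mul_sum]
  refine Finset.sum_congr rfl fun u hu => ?_
  have hu : ∑ i ∈ u.support, u i = m := by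
    rw [← hφ (mem_support_iff.mp hu), Finsupp.weight_apply, Finsupp.sum]
    simp
  simp only [Pi.smul_apply, smul_eq_mul, mul_pow, Finset.prod_mul_distrib,
    Finset.prod_pow_eq_pow_sum, hu]
  ring

theorem singularAt_smul_iff {K : Type*} [CommRing K] [IsDomain K] {n k : ℕ}
    {F : MvPolynomial (Fin (n + 1)) K} (hF : F.IsHomogeneous k) {c : K} (hc : c ≠ 0)
    (P : Fin (n + 1) → K) : SingularAt F (c • P) ↔ SingularAt F P := by
  simp only [SingularAt, hF.eval_smul, fun i => (hF.pderiv (i := i)).eval_smul,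
    mul_eq_zero, pow_ne_zero _ hc, false_or]

theorem Fin.cons_smul {α : Type*} [Mul α] {n : ℕ} (c s : α) (x : Fin n → α) :
    (Fin.cons (c * s) (c • x) : Fin (n + 1) → α) = c • Fin.cons s x := by
  ext i
  refine Fin.cases ?_ (fun j => ?_) i <;> simp

/-- The paper's `F = x₀ f_{d-1} + f_d`, with `g = f_{d-1}` and `h = f_d` in the variables
`x₁, …, xₙ`. -/
noncomputable def xZeroMulAdd {R : Type*} [CommSemiring R] {n : ℕ}
    (g h : MvPolynomial (Fin n) R) : MvPolynomial (Fin (n + 1)) R :=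
  X 0 * rename Fin.succ g + rename Fin.succ h

section CommRing

variable {R : Type*} [CommRing R] {n : ℕ} (g h : MvPolynomial (Fin n) R) (s : R) (x : Fin n → R)

theorem eval_cons_xZeroMulAdd :
    eval (Fin.cons s x) (xZeroMulAdd g h) = s * eval x g + eval x h := by
  simp [xZeroMulAdd, eval_rename, Function.comp_def]

theorem pderiv_zero_rename_succ (p : MvPolynomial (Fin n) R) :
    pderiv 0 (rename Fin.succ p) = 0 :=
  pderiv_eq_zero_of_notMem_vars fun hmem => by
    obtain ⟨j, -, hj⟩ := mem_vars_rename _ _ hmem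
    exact Fin.succ_ne_zero j hj

theorem eval_cons_pderiv_zero_xZeroMulAdd :
    eval (Fin.cons s x) (pderiv 0 (xZeroMulAdd g h)) = eval x g := by
  simp [xZeroMulAdd, pderiv_zero_rename_succ, eval_rename, Function.comp_def]

theorem eval_cons_pderiv_succ_xZeroMulAdd (i : Fin n) :
    eval (Fin.cons s x) (pderiv i.succ (xZeroMulAdd g h)) =
      s * eval x (pderiv i g) + eval x (pderiv i h) := by
  simp [xZeroMulAdd, pderiv_rename (Fin.succ_injective n), pderiv_X_of_ne (Fin.succ_ne_zero i).symm,
    eval_rename, Function.comp_def]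

theorem singularAt_cons_xZeroMulAdd_iff :
    SingularAt (xZeroMulAdd g h) (Fin.cons s x) ↔
      eval x g = 0 ∧ eval x h = 0 ∧
        ∀ i, s * eval x (pderiv i g) + eval x (pderiv i h) = 0 := by
  simp only [SingularAt, Fin.forall_fin_succ, eval_cons_xZeroMulAdd,
    eval_cons_pderiv_zero_xZeroMulAdd, eval_cons_pderiv_succ_xZeroMulAdd]
  constructor
  · rintro ⟨hF, hg, hi⟩
    exact ⟨hg, by simpa [hg] using hF, hi⟩
  · rintro ⟨hg, hh, hi⟩
    exact ⟨by simp [hg, hh], hg, hi⟩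

end CommRing

theorem MvPolynomial.IsHomogeneous.xZeroMulAdd {R : Type*} [CommSemiring R] {n m : ℕ}
    {g h : MvPolynomial (Fin n) R} (hg : g.IsHomogeneous m) (hh : h.IsHomogeneous (m + 1)) :
    (xZeroMulAdd g h).IsHomogeneous (m + 1) := by
  rw [add_comm m 1]
  exact ((isHomogeneous_X R 0).mul (hg.rename_isHomogeneous)).add
    (by simpa [add_comm] using hh.rename_isHomogeneous)

section Line

variable {K : Type*} [Field K] {n m : ℕ} {g h : MvPolynomial (Fin n) K} {a : Fin n → K}

theorem singularAt_cons_smul_iff (hg : g.IsHomogeneous m) (hh : h.IsHomogeneous (m + 1))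
    {s t : K} (ht : t ≠ 0) :
    SingularAt (xZeroMulAdd g h) (Fin.cons s (t • a)) ↔
      SingularAt (xZeroMulAdd g h) (Fin.cons (s / t) a) := by
  rw [← singularAt_smul_iff (hg.xZeroMulAdd hh) ht (Fin.cons (s / t) a), ← Fin.cons_smul,
    mul_div_cancel₀ _ ht]

theorem singularAt_cons_smul_of_singularAt_cons (hg : g.IsHomogeneous m)
    (hh : h.IsHomogeneous (m + 1)) {u₁ u₂ : K} (hu : u₁ ≠ u₂)
    (h₁ : SingularAt (xZeroMulAdd g h) (Fin.cons u₁ a))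
    (h₂ : SingularAt (xZeroMulAdd g h) (Fin.cons u₂ a)) (s t : K) :
    SingularAt (xZeroMulAdd g h) (Fin.cons s (t • a)) := by
  rw [singularAt_cons_xZeroMulAdd_iff] at h₁ h₂ ⊢
  obtain ⟨hga, hha, hi₁⟩ := h₁
  have hdg : ∀ i, eval a (pderiv i g) = 0 := fun i => by
    have : (u₁ - u₂) * eval a (pderiv i g) = 0 := by linear_combination hi₁ i - h₂.2.2 i
    exact (mul_eq_zero.mp this).resolve_left (sub_ne_zero.mpr hu)
  have hdh : ∀ i, eval a (pderiv i h) = 0 := fun i => by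
    simpa [hdg i] using hi₁ i
  simp [hg.eval_smul, hh.eval_smul, hg.pderiv.eval_smul, hh.pderiv.eval_smul, hga, hha, hdg, hdh]

end Line

theorem stmt3_general {K : Type*} [Field K] {n d : ℕ} (hd : 3 ≤ d)
    (g h : MvPolynomial (Fin n) K)
    (hg : g.IsHomogeneous (d - 1)) (hh : h.IsHomogeneous d)
    (a : Fin n → K)
    (hnot : ¬ ∀ s t : K, SingularAt (X 0 * rename Fin.succ g + rename Fin.succ h)
      (Fin.cons s (fun j => t * a j))) :
    ∀ s₁ t₁ s₂ t₂ : K, t₁ ≠ 0 → t₂ ≠ 0 →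
      SingularAt (X 0 * rename Fin.succ g + rename Fin.succ h)
        (Fin.cons s₁ (fun j => t₁ * a j)) →
      SingularAt (X 0 * rename Fin.succ g + rename Fin.succ h)
        (Fin.cons s₂ (fun j => t₂ * a j)) →
      s₁ * t₂ = s₂ * t₁ := by
  intro s₁ t₁ s₂ t₂ ht₁ ht₂ hS₁ hS₂
  obtain ⟨m, rfl⟩ : ∃ m, d = m + 1 := ⟨d - 1, by omega⟩
  rw [Nat.add_sub_cancel] at hg
  have hS₁' := (singularAt_cons_smul_iff hg hh ht₁).mp hS₁
  have hS₂' := (singularAt_cons_smul_iff hg hh ht₂).mp hS₂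
  by_contra hne
  have hu : s₁ / t₁ ≠ s₂ / t₂ := by rwa [ne_eq, div_eq_div_iff ht₁ ht₂]
  exact hnot (singularAt_cons_smul_of_singularAt_cons hg hh hu hS₁' hS₂')

/-- if not every point of the line `L_a` is singular on `Z(F)`, then `L_a` carries
at most one singular point besides `O`: any two singular points of `L_a` with `t ≠ 0` coincide
projectively. -/
theorem stmt3 {K : Type*} [Field K] [CharZero K] [IsAlgClosed K] {n d : ℕ} (hd : 3 ≤ d)
    (g h : MvPolynomial (Fin n) K)
    (hg : g.IsHomogeneous (d - 1)) (hh : h.IsHomogeneous d) (hg0 : g ≠ 0)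
    (a : Fin n → K) (ha : a ≠ 0)
    (hnot : ¬ ∀ s t : K, SingularAt (X 0 * rename Fin.succ g + rename Fin.succ h)
      (Fin.cons s (fun j => t * a j))) :
    ∀ s₁ t₁ s₂ t₂ : K, t₁ ≠ 0 → t₂ ≠ 0 →
      SingularAt (X 0 * rename Fin.succ g + rename Fin.succ h)
        (Fin.cons s₁ (fun j => t₁ * a j)) →
      SingularAt (X 0 * rename Fin.succ g + rename Fin.succ h)
        (Fin.cons s₂ (fun j => t₂ * a j)) →
      s₁ * t₂ = s₂ * t₁ :=
  stmt3_general hd g h hg hh a hnot
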